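/- Let θ : ℕ → ℝ be positive and nondecreasing with n/θ_n → ∞ as n → ∞ (Case A). Let λ_A(n) = ∑_{j=1}^n θ_n/(θ_n+j−1) and μ_A(n) = θ_n·log(1 + n/θ_n). Then the total variation distance between the Poisson distributions with means λ_A(n) and μ_A(n) satisfies d_TV(Poisson(λ_A(n)), Poisson(μ_A(n))) = O(1/√(θ_n·log(n/θ_n))); that is, there exist a constant C and an index N such that for all n ≥ N this distance is at most C/√(θ_n·log(n/θ_n)). -/

import Mathlib

/-!
For probability vectors `p`, `q`, Cauchy–Schwarz applied to `|p - q| = |√p - √q| (√p + √q)`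
gives `∑ |p - q| ≤ 2 √(1 - B²)`, where `B = ∑ √p √q` is the Bhattacharyya coefficient. For two
Poisson laws `B = exp (-(√λ - √μ)² / 2)`, so their total variation distance is at most
`|√λ - √μ| ≤ |λ - μ| / √μ`.

Since `θ / (θ + i + 1) ≤ θ (log (θ + i + 1) - log (θ + i)) ≤ θ / (θ + i)` and the middle terms
telescope to `μ_A(n)`, we get `0 ≤ λ_A(n) - μ_A(n) ≤ 1`; and `μ_A(n) ≥ θ_n log (n / θ_n) > 0`
once `n / θ_n > 1`. This gives the bound with `C = 1`.
-/

open Filter Finset Real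
open scoped Nat

lemma sub_eq_sqrt_sub_mul_sqrt_add {a b : ℝ} (ha : 0 ≤ a) (hb : 0 ≤ b) :
    a - b = (√a - √b) * (√a + √b) := by
  linear_combination -(sq_sqrt ha) + sq_sqrt hb

section Bhattacharyya

variable {ι : Type*} {p q : ι → ℝ}

lemma summable_sqrt_mul_sqrt (hp : ∀ i, 0 ≤ p i) (hq : ∀ i, 0 ≤ q i) (hps : Summable p)
    (hqs : Summable q) : Summable fun i ↦ √(p i) * √(q i) :=
  (hps.add hqs).of_nonneg_of_le (fun i ↦ by positivity) fun i ↦ by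
    nlinarith [sq_sqrt (hp i), sq_sqrt (hq i), sq_nonneg (√(p i) - √(q i)), sqrt_nonneg (p i),
      sqrt_nonneg (q i)]

theorem tsum_abs_sub_le_two_mul_sqrt_one_sub_sq (hp : ∀ i, 0 ≤ p i) (hq : ∀ i, 0 ≤ q i)
    (hp1 : HasSum p 1) (hq1 : HasSum q 1) :
    ∑' i, |p i - q i| ≤ 2 * √(1 - (∑' i, √(p i) * √(q i)) ^ 2) := by
  set B := ∑' i, √(p i) * √(q i)
  have hB : HasSum (fun i ↦ √(p i) * √(q i)) B :=
    (summable_sqrt_mul_sqrt hp hq hp1.summable hq1.summable).hasSum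
  have hB0 : 0 ≤ B := tsum_nonneg fun i ↦ by positivity
  have hminus : HasSum (fun i ↦ (√(p i) - √(q i)) ^ 2) (2 - 2 * B) := by
    rw [show (2 : ℝ) - 2 * B = 1 + 1 - 2 * B by ring]
    refine ((hp1.add hq1).sub (hB.mul_left 2)).congr_fun fun i ↦ ?_
    rw [sub_sq, sq_sqrt (hp i), sq_sqrt (hq i)]; ring
  have hplus : HasSum (fun i ↦ (√(p i) + √(q i)) ^ 2) (2 + 2 * B) := by
    rw [show (2 : ℝ) + 2 * B = 1 + 1 + 2 * B by ring]
    refine ((hp1.add hq1).add (hB.mul_left 2)).congr_fun fun i ↦ ?_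
    rw [add_sq, sq_sqrt (hp i), sq_sqrt (hq i)]; ring
  refine tsum_le_of_sum_le' (by positivity) fun s ↦ ?_
  calc ∑ i ∈ s, |p i - q i|
      = ∑ i ∈ s, |√(p i) - √(q i)| * (√(p i) + √(q i)) := sum_congr rfl fun i _ ↦ by
        rw [sub_eq_sqrt_sub_mul_sqrt_add (hp i) (hq i), abs_mul,
          abs_of_nonneg (by positivity : 0 ≤ √(p i) + √(q i))]
    _ ≤ √(∑ i ∈ s, |√(p i) - √(q i)| ^ 2) * √(∑ i ∈ s, (√(p i) + √(q i)) ^ 2) :=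
        Real.sum_mul_le_sqrt_mul_sqrt _ _ _
    _ ≤ √(2 - 2 * B) * √(2 + 2 * B) := by
        simp_rw [sq_abs]
        gcongr <;> exact sum_le_hasSum s (fun i _ ↦ sq_nonneg _) ‹_›
    _ = 2 * √(1 - B ^ 2) := by
        rw [← sqrt_mul' _ (by positivity),
          show (2 - 2 * B) * (2 + 2 * B) = 2 ^ 2 * (1 - B ^ 2) by ring,
          sqrt_mul (by positivity), sqrt_sq zero_le_two]

end Bhattacharyya

noncomputable def poissonMass (r : ℝ) (k : ℕ) : ℝ := exp (-r) * r ^ k / k !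

lemma hasSum_pow_div_factorial (x : ℝ) : HasSum (fun k ↦ x ^ k / k !) (exp x) :=
  exp_eq_exp_ℝ ▸ NormedSpace.expSeries_div_hasSum_exp x

section Poisson

variable {r s : ℝ}

lemma poissonMass_nonneg (hr : 0 ≤ r) (k : ℕ) : 0 ≤ poissonMass r k := by
  unfold poissonMass; positivity

lemma hasSum_poissonMass (hr : 0 ≤ r) : HasSum (poissonMass r) 1 :=
  ProbabilityTheory.hasSum_one_poissonMeasure ⟨r, hr⟩

lemma sqrt_poissonMass_mul_sqrt_poissonMass (hr : 0 ≤ r) (hs : 0 ≤ s) (k : ℕ) :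
    √(poissonMass r k) * √(poissonMass s k) = exp (-(r + s) / 2) * (√r * √s) ^ k / k ! := by
  rw [← sqrt_mul (poissonMass_nonneg hr k),
    ← sqrt_sq (by positivity : 0 ≤ exp (-(r + s) / 2) * (√r * √s) ^ k / k !)]
  have hexp : exp (-(r + s) / 2) ^ 2 = exp (-r) * exp (-s) := by
    rw [← exp_nat_mul, ← exp_add]; ring_nf
  have hsqrt : (√r * √s) ^ 2 = r * s := by rw [mul_pow, sq_sqrt hr, sq_sqrt hs]
  rw [div_pow, mul_pow, hexp, ← pow_mul, mul_comm k 2, pow_mul, hsqrt, poissonMass, poissonMass]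
  congr 1
  ring

lemma hasSum_sqrt_poissonMass_mul_sqrt_poissonMass (hr : 0 ≤ r) (hs : 0 ≤ s) :
    HasSum (fun k ↦ √(poissonMass r k) * √(poissonMass s k)) (exp (-(√r - √s) ^ 2 / 2)) := by
  simp_rw [sqrt_poissonMass_mul_sqrt_poissonMass hr hs, mul_div_assoc]
  rw [show -(√r - √s) ^ 2 / 2 = -(r + s) / 2 + √r * √s by
    linear_combination (-(sq_sqrt hr) - sq_sqrt hs) / 2, exp_add]
  exact (hasSum_pow_div_factorial (√r * √s)).mul_left _

theorem tsum_abs_poissonMass_sub_le (hr : 0 ≤ r) (hs : 0 ≤ s) :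
    ∑' k, |poissonMass r k - poissonMass s k| ≤ 2 * |√r - √s| := by
  calc _ ≤ 2 * √(1 - (∑' k, √(poissonMass r k) * √(poissonMass s k)) ^ 2) :=
        tsum_abs_sub_le_two_mul_sqrt_one_sub_sq (poissonMass_nonneg hr) (poissonMass_nonneg hs)
          (hasSum_poissonMass hr) (hasSum_poissonMass hs)
    _ ≤ 2 * √((√r - √s) ^ 2) := by
        rw [(hasSum_sqrt_poissonMass_mul_sqrt_poissonMass hr hs).tsum_eq, ← exp_nat_mul]
        gcongr
        rw [show ((2 : ℕ) : ℝ) * (-(√r - √s) ^ 2 / 2) = -(√r - √s) ^ 2 by push_cast; ring]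
        linarith [one_sub_le_exp_neg ((√r - √s) ^ 2)]
    _ = 2 * |√r - √s| := by rw [sqrt_sq_eq_abs]

end Poisson

lemma abs_sqrt_sub_sqrt_le_abs_sub_div_sqrt {x y : ℝ} (hx : 0 ≤ x) (hy : 0 < y) :
    |√x - √y| ≤ |x - y| / √y := by
  rw [le_div_iff₀ (sqrt_pos.2 hy)]
  calc |√x - √y| * √y ≤ |√x - √y| * (√x + √y) := by
        gcongr; exact le_add_of_nonneg_left (sqrt_nonneg x)
    _ = |x - y| := by
        rw [sub_eq_sqrt_sub_mul_sqrt_add hx hy.le, abs_mul,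
          abs_of_nonneg (by positivity : 0 ≤ √x + √y)]

section HarmonicLog

variable {s : ℝ}

lemma inv_add_one_le_log_add_one_sub_log {y : ℝ} (hy : 0 < y) :
    (y + 1)⁻¹ ≤ log (y + 1) - log y := by
  have h := one_sub_inv_le_log_of_pos (by positivity : 0 < (y + 1) / y)
  rwa [log_div (by positivity) hy.ne', inv_div, one_sub_div (by positivity), add_sub_cancel_left,
    one_div] at h

lemma log_add_one_sub_log_le_inv {y : ℝ} (hy : 0 < y) : log (y + 1) - log y ≤ y⁻¹ := by
  have h := log_le_sub_one_of_pos (by positivity : 0 < (y + 1) / y)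
  rwa [log_div (by positivity) hy.ne', div_sub_one hy.ne', add_sub_cancel_left, one_div] at h

lemma mul_log_one_add_div_eq_sum (hs : 0 < s) (n : ℕ) :
    s * log (1 + n / s) = ∑ i ∈ range n, s * (log (s + i + 1) - log (s + i)) := by
  rw [← mul_sum, one_add_div hs.ne', log_div (by positivity) hs.ne']
  have := sum_range_sub (fun i : ℕ ↦ log (s + i)) n
  push_cast at this
  simp only [← add_assoc] at this
  rw [this, add_zero, add_comm]

lemma mul_log_one_add_div_le_sum (hs : 0 < s) (n : ℕ) :
    s * log (1 + n / s) ≤ ∑ i ∈ range n, s / (s + i) := by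
  rw [mul_log_one_add_div_eq_sum hs]
  gcongr with i
  rw [div_eq_mul_inv]
  gcongr
  exact log_add_one_sub_log_le_inv (by positivity)

lemma sum_sub_mul_log_one_add_div_le_one (hs : 0 < s) (n : ℕ) :
    ∑ i ∈ range n, s / (s + i) - s * log (1 + n / s) ≤ 1 := by
  have hlower : ∑ i ∈ range n, s / (s + (i + 1 : ℕ)) ≤ s * log (1 + n / s) := by
    rw [mul_log_one_add_div_eq_sum hs]
    gcongr with i
    rw [div_eq_mul_inv, Nat.cast_succ, ← add_assoc]
    gcongr
    exact inv_add_one_le_log_add_one_sub_log (by positivity)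
  calc ∑ i ∈ range n, s / (s + i) - s * log (1 + n / s)
      ≤ ∑ i ∈ range n, (s / (s + i) - s / (s + (i + 1 : ℕ))) := by
        rw [sum_sub_distrib]; linarith
    _ = 1 - s / (s + n) := by rw [sum_range_sub']; simp [div_self hs.ne']
    _ ≤ 1 := sub_le_self _ (by positivity)

end HarmonicLog

lemma sum_Icc_div_add_sub_one_eq (s : ℝ) (n : ℕ) :
    ∑ j ∈ Icc 1 n, s / (s + (j : ℝ) - 1) = ∑ i ∈ range n, s / (s + i) := by
  rw [← Ico_add_one_right_eq_Icc, sum_Ico_eq_sum_range]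
  refine sum_congr (by simp) fun i _ ↦ ?_
  push_cast
  ring_nf

theorem stmt_10_general (θ : ℕ → ℝ) (hpos : ∀ n, 0 < θ n)
    (hA : Tendsto (fun n : ℕ => (n : ℝ) / θ n) atTop atTop)
    (lamA : ℕ → ℝ) (hlamA : ∀ n, lamA n = ∑ j ∈ Finset.Icc 1 n, θ n / (θ n + (j : ℝ) - 1))
    (muA : ℕ → ℝ) (hmuA : ∀ n, muA n = θ n * Real.log (1 + (n : ℝ) / θ n)) :
    ∃ C : ℝ, ∃ N : ℕ, ∀ n ≥ N,
      (1 / 2) * ∑' k : ℕ,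
          |Real.exp (-lamA n) * lamA n ^ k / (Nat.factorial k) -
            Real.exp (-muA n) * muA n ^ k / (Nat.factorial k)| ≤
        C / Real.sqrt (θ n * Real.log ((n : ℝ) / θ n)) := by
  obtain ⟨N, hN⟩ := eventually_atTop.mp (hA.eventually_gt_atTop 1)
  refine ⟨1, N, fun n hn ↦ ?_⟩
  have hθ := hpos n
  have hlamA' : lamA n = ∑ i ∈ range n, θ n / (θ n + i) := by
    rw [hlamA, sum_Icc_div_add_sub_one_eq]
  have hmu_le_lam : muA n ≤ lamA n := by
    rw [hlamA', hmuA]; exact mul_log_one_add_div_le_sum hθ n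
  have hlam_sub_mu : lamA n - muA n ≤ 1 := by
    rw [hlamA', hmuA]; exact sum_sub_mul_log_one_add_div_le_one hθ n
  have hbound_pos : 0 < θ n * log (n / θ n) := mul_pos hθ (log_pos (hN n hn))
  have hbound_le_mu : θ n * log (n / θ n) ≤ muA n := by
    rw [hmuA]; gcongr <;> linarith [hN n hn]
  have hmu := hbound_pos.trans_le hbound_le_mu
  calc (1 / 2) * ∑' k, |poissonMass (lamA n) k - poissonMass (muA n) k|
      ≤ |√(lamA n) - √(muA n)| := by
        linarith [tsum_abs_poissonMass_sub_le (hmu.le.trans hmu_le_lam) hmu.le]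
    _ ≤ |lamA n - muA n| / √(muA n) :=
        abs_sqrt_sub_sqrt_le_abs_sub_div_sqrt (hmu.le.trans hmu_le_lam) hmu
    _ ≤ 1 / √(θ n * log (n / θ n)) := by
        rw [abs_of_nonneg (sub_nonneg.2 hmu_le_lam)]
        gcongr

theorem stmt_10 (θ : ℕ → ℝ) (hpos : ∀ n, 0 < θ n) (hmono : Monotone θ)
    (hA : Tendsto (fun n : ℕ => (n : ℝ) / θ n) atTop atTop)
    (lamA : ℕ → ℝ) (hlamA : ∀ n, lamA n = ∑ j ∈ Finset.Icc 1 n, θ n / (θ n + (j : ℝ) - 1))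
    (muA : ℕ → ℝ) (hmuA : ∀ n, muA n = θ n * Real.log (1 + (n : ℝ) / θ n)) :
    ∃ C : ℝ, ∃ N : ℕ, ∀ n ≥ N,
      (1 / 2) * ∑' k : ℕ,
          |Real.exp (-lamA n) * lamA n ^ k / (Nat.factorial k) -
            Real.exp (-muA n) * muA n ^ k / (Nat.factorial k)| ≤
        C / Real.sqrt (θ n * Real.log ((n : ℝ) / θ n)) :=
  stmt_10_general θ hpos hA lamA hlamA muA hmuA
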